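/- arXiv:1611.08028 — 3 statements merged into one kernel-verified Lean document; each statement's English description precedes it below -/
import Mathlib

section
/- For every n ≥ 0, the left-sided half-integral of √(1+t)·U_n(t) satisfies (1/√π)·∫_{−1}^{x} √(1+t)·U_n(t)/√(x−t) dt = (√π/2)·(P_{n+1}(x) + P_n(x)) for all x ∈ (−1, 1]. -/
open Real intervalIntegral

/-- Ultraspherical (Gegenbauer) polynomials via the three-term recurrence
`(n+1) C_{n+1} = 2(n+λ) x C_n − (n+2λ−1) C_{n−1}`, `C_0 = 1`, `C_{-1} = 0`. -/
noncomputable def Geg (l : ℝ) : ℕ → ℝ → ℝ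
  | 0, _ => 1
  | 1, x => 2 * l * x
  | (n + 2), x =>
      (2 * ((n : ℝ) + 1 + l) * x * Geg l (n + 1) x
        - ((n : ℝ) + 2 * l) * Geg l n x) / ((n : ℝ) + 2)

/-- Ultraspherical polynomials with integer index, zero for negative index. -/
noncomputable def GegZ (l : ℝ) (n : ℤ) (x : ℝ) : ℝ :=
  if 0 ≤ n then Geg l n.toNat x else 0

/-!
Both families are expanded in powers of `1 + x` with explicit binomial coefficients,
`U_n(x) = ∑ₖ (-1)^(n+k) 2^k C(n+k+1, 2k+1) (1+x)^k` and
`P_n(x) = ∑ⱼ (-1)^(n+j) C(n+j, 2j) C(2j, j) ((1+x)/2)^j`, each checked against the three-term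
recurrence. After the substitution `t = -1 + (1+x) u`, the half-integral maps `√(1+t) (1+t)^k`
to `B(k+3/2, 1/2) (1+x)^(k+1) = π C(2k+2, k+1) / 4^(k+1) · (1+x)^(k+1)`. Comparing coefficients
of `(1+x)^(k+1)`, the theorem becomes Pascal's rule
`C(n+k+2, 2k+2) - C(n+k+1, 2k+2) = C(n+k+1, 2k+1)`.
-/

open MeasureTheory

theorem Nat.cast_choose_succ_right_mul (N m : ℕ) :
    ((m : ℝ) + 1) * N.choose (m + 1) = ((N : ℝ) - m) * N.choose m := by
  rcases le_or_gt m N with h | h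
  · rw [mul_comm, mul_comm ((N : ℝ) - m), ← Nat.cast_sub h]
    exact_mod_cast Nat.choose_succ_right_eq N m
  · simp [Nat.choose_eq_zero_of_lt h, Nat.choose_eq_zero_of_lt (Nat.lt_succ_of_lt h)]

open Polynomial in
theorem Geg_eq_sum_of_recurrence (l : ℝ) (c : ℕ → ℕ → ℝ) (hc : ∀ n j, n < j → c n j = 0)
    (h00 : c 0 0 = 1) (h10 : c 1 0 = -(2 * l)) (h11 : c 1 1 = 2 * l)
    (hrec_zero : ∀ n : ℕ,
      (n + 2) * c (n + 2) 0 = -(2 * (n + 1 + l) * c (n + 1) 0) - (n + 2 * l) * c n 0)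
    (hrec_succ : ∀ n j : ℕ, (n + 2) * c (n + 2) (j + 1) =
      2 * (n + 1 + l) * (c (n + 1) j - c (n + 1) (j + 1)) - (n + 2 * l) * c n (j + 1))
    (n : ℕ) (x : ℝ) :
    Geg l n x = ∑ j ∈ Finset.range (n + 1), c n j * (1 + x) ^ j := by
  set p : ℕ → ℝ[X] := fun m => ∑ j ∈ Finset.range (m + 1), C (c m j) * X ^ j with hp
  have coeff_p (m i : ℕ) : (p m).coeff i = c m i := by
    simp only [hp, finsetSum_coeff, coeff_C_mul_X_pow, Finset.sum_ite_eq, Finset.mem_range]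
    split_ifs with h
    · rfl
    · exact (hc m i (by omega)).symm
  have p_rec (m : ℕ) : C ((m : ℝ) + 2) * p (m + 2) =
      C (2 * ((m : ℝ) + 1 + l)) * ((X - 1) * p (m + 1)) - C ((m : ℝ) + 2 * l) * p m := by
    ext i
    rcases i with _ | i
    · simp only [coeff_sub, coeff_C_mul, sub_mul, one_mul, coeff_X_mul_zero, coeff_p]
      linarith [hrec_zero m]
    · simp only [coeff_sub, coeff_C_mul, sub_mul, one_mul, coeff_X_mul, coeff_p]
      exact hrec_succ m i
  have eval_p (m : ℕ) :
      (p m).eval (1 + x) = ∑ j ∈ Finset.range (m + 1), c m j * (1 + x) ^ j := by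
    simp [hp, eval_finsetSum]
  rw [← eval_p]
  induction n using Nat.strong_induction_on with
  | _ n ih =>
    match n with
    | 0 => simp [Geg, eval_p, h00]
    | 1 =>
      simp only [Geg, eval_p, Finset.sum_range_succ, Finset.range_one, Finset.sum_singleton, h10,
        h11, pow_zero, pow_one, mul_one]
      ring
    | m + 2 =>
      have h := congrArg (eval (1 + x)) (p_rec m)
      simp only [eval_mul, eval_sub, eval_C, eval_X, eval_one] at h
      rw [Geg, ih (m + 1) (by omega), ih m (by omega)]
      field_simp
      linear_combination -h

noncomputable def legendreCoeff (n j : ℕ) : ℝ :=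
  (-1) ^ (n + j) * (n + j).choose (2 * j) * j.centralBinom / 2 ^ j

noncomputable def chebyshevUCoeff (n k : ℕ) : ℝ :=
  (-1) ^ (n + k) * 2 ^ k * (n + k + 1).choose (2 * k + 1)

theorem legendreCoeff_zero_right (n : ℕ) : legendreCoeff n 0 = (-1) ^ n := by
  simp [legendreCoeff]

theorem chebyshevUCoeff_zero_right (n : ℕ) : chebyshevUCoeff n 0 = (-1) ^ n * (n + 1) := by
  simp [chebyshevUCoeff]

theorem legendreCoeff_eq_zero_of_lt {n j : ℕ} (h : n < j) : legendreCoeff n j = 0 := by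
  simp [legendreCoeff, Nat.choose_eq_zero_of_lt (show n + j < 2 * j by omega)]

theorem chebyshevUCoeff_eq_zero_of_lt {n k : ℕ} (h : n < k) : chebyshevUCoeff n k = 0 := by
  simp [chebyshevUCoeff, Nat.choose_eq_zero_of_lt (show n + k + 1 < 2 * k + 1 by omega)]

theorem choose_mul_centralBinom_recurrence (n j : ℕ) :
    ((n : ℝ) + 2) * (n + j + 3).choose (2 * j + 2) * (j + 1).centralBinom
      + ((n : ℝ) + 1) * (n + j + 1).choose (2 * j + 2) * (j + 1).centralBinom
      = (2 * n + 3) * (2 * (n + j + 1).choose (2 * j) * j.centralBinom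
          + (n + j + 2).choose (2 * j + 2) * (j + 1).centralBinom) := by
  have succ_mul (a b : ℕ) :
      ((a : ℝ) + 1) * a.choose b = ((b : ℝ) + 1) * (a + 1).choose (b + 1) := by
    rw [mul_comm ((b : ℝ) + 1)]
    exact_mod_cast Nat.add_one_mul_choose_eq a b
  -- Each binomial below is `C(N, 2j)` times a polynomial in `N` and `j`, and `C(2j+2, j+1)` is a
  -- multiple of `C(2j, j)`: the claim reduces to a polynomial identity in `n` and `j`.
  set N := n + j + 1 with hN
  have h1 := succ_mul N (2 * j)
  have h2 := succ_mul (N + 1) (2 * j + 1)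
  have h3 := succ_mul N (2 * j + 1)
  have h4 := Nat.cast_choose_succ_right_mul N (2 * j)
  have h5 := Nat.cast_choose_succ_right_mul N (2 * j + 1)
  have hc : ((j : ℝ) + 1) * (j + 1).centralBinom = 2 * (2 * j + 1) * j.centralBinom := by
    exact_mod_cast Nat.succ_mul_centralBinom_succ j
  have hf : ((2 * j + 1) * (2 * j + 2) : ℝ) * (N + 2).choose (2 * j + 2)
      = ((N : ℝ) + 2) * (N + 1) * N.choose (2 * j) := by
    push_cast at h1 h2
    linear_combination -(2 * (j : ℝ) + 1) * h2 - ((N : ℝ) + 2) * h1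
  have he : ((2 * j + 1) * (2 * j + 2) : ℝ) * (N + 1).choose (2 * j + 2)
      = ((N : ℝ) + 1) * (N - 2 * j) * N.choose (2 * j) := by
    push_cast at h3 h4
    linear_combination -(2 * (j : ℝ) + 1) * h3 + ((N : ℝ) + 1) * h4
  have hg : ((2 * j + 1) * (2 * j + 2) : ℝ) * N.choose (2 * j + 2)
      = ((N : ℝ) - 2 * j - 1) * (N - 2 * j) * N.choose (2 * j) := by
    push_cast at h4 h5
    linear_combination (2 * (j : ℝ) + 1) * h5 + ((N : ℝ) - 2 * j - 1) * h4
  rw [show n + j + 3 = N + 2 by omega, show n + j + 2 = N + 1 by omega]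
  apply mul_left_cancel₀ (show ((2 * j + 1) * (2 * j + 2) * (j + 1) : ℝ) ≠ 0 by positivity)
  have hNr : (N : ℝ) = n + j + 1 := by rw [hN]; push_cast; ring
  rw [hNr] at hf he hg
  linear_combination ((n : ℝ) + 2) * (j + 1) * (j + 1).centralBinom * hf
    + ((n : ℝ) + 1) * (j + 1) * (j + 1).centralBinom * hg
    - (2 * (n : ℝ) + 3) * (j + 1) * (j + 1).centralBinom * he
    + N.choose (2 * j) * (((n : ℝ) + 2) * (n + j + 3) * (n + j + 2)
      + (n + 1) * (n - j) * (n - j + 1) - (2 * n + 3) * (n + j + 2) * (n - j + 1)) * hc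

theorem Geg_one_half_eq_sum_legendreCoeff (n : ℕ) (x : ℝ) :
    Geg (1 / 2) n x = ∑ j ∈ Finset.range (n + 1), legendreCoeff n j * (1 + x) ^ j := by
  refine Geg_eq_sum_of_recurrence _ _ (fun _ _ h => legendreCoeff_eq_zero_of_lt h)
    (by simp [legendreCoeff]) (by simp [legendreCoeff])
    (by simp [legendreCoeff, Nat.centralBinom_eq_two_mul_choose]) (fun m => ?_)
    (fun m j => ?_) n x
  · simp only [legendreCoeff_zero_right]
    ring
  · simp only [legendreCoeff]
    rw [show m + 2 + (j + 1) = m + j + 3 by ring, show m + 1 + (j + 1) = m + j + 2 by ring,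
      show m + 1 + j = m + j + 1 by ring, show m + (j + 1) = m + j + 1 by ring,
      show 2 * (j + 1) = 2 * j + 2 by ring]
    linear_combination ((-1) ^ (m + j + 1) / 2 ^ (j + 1)) * choose_mul_centralBinom_recurrence m j

theorem Geg_one_eq_sum_chebyshevUCoeff (n : ℕ) (x : ℝ) :
    Geg 1 n x = ∑ k ∈ Finset.range (n + 1), chebyshevUCoeff n k * (1 + x) ^ k := by
  refine Geg_eq_sum_of_recurrence _ _ (fun _ _ h => chebyshevUCoeff_eq_zero_of_lt h)
    (by simp [chebyshevUCoeff]) (by simp [chebyshevUCoeff]) (by simp [chebyshevUCoeff])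
    (fun m => ?_) (fun m j => ?_) n x
  · simp only [chebyshevUCoeff_zero_right]
    push_cast
    ring
  · -- Pascal's rule, applied three times, gives
    -- `C(N+2, m+2) = C(N, m) + 2 C(N+1, m+2) - C(N, m+2)` for `N = m+j+2`, `m = 2j+1`.
    have p1 := congrArg (Nat.cast : ℕ → ℝ) (Nat.choose_succ_succ' (m + j + 3) (2 * j + 2))
    have p2 := congrArg (Nat.cast : ℕ → ℝ) (Nat.choose_succ_succ' (m + j + 2) (2 * j + 1))
    have p3 := congrArg (Nat.cast : ℕ → ℝ) (Nat.choose_succ_succ' (m + j + 2) (2 * j + 2))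
    simp only [chebyshevUCoeff]
    rw [show m + 2 + (j + 1) + 1 = m + j + 3 + 1 by ring,
      show m + 1 + (j + 1) + 1 = m + j + 2 + 1 by ring, show m + 1 + j + 1 = m + j + 2 by ring,
      show m + (j + 1) + 1 = m + j + 2 by ring, show 2 * (j + 1) + 1 = 2 * j + 2 + 1 by ring]
    push_cast at p1 p2 p3 ⊢
    linear_combination (-1) ^ (m + j + 1) * 2 ^ (j + 1) * ((m : ℝ) + 2) * (p1 + p2 - p3)

theorem Geg_one_half_succ_add_self (n : ℕ) (x : ℝ) :
    Geg (1 / 2) (n + 1) x + Geg (1 / 2) n x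
      = ∑ k ∈ Finset.range (n + 1),
          (legendreCoeff (n + 1) (k + 1) + legendreCoeff n (k + 1)) * (1 + x) ^ (k + 1) := by
  have h0 : legendreCoeff (n + 1) 0 + legendreCoeff n 0 = 0 := by
    rw [legendreCoeff_zero_right, legendreCoeff_zero_right, pow_succ]
    ring
  have hext : ∑ j ∈ Finset.range (n + 1), legendreCoeff n j * (1 + x) ^ j
      = ∑ j ∈ Finset.range (n + 2), legendreCoeff n j * (1 + x) ^ j := by
    rw [Finset.sum_range_succ _ (n + 1), legendreCoeff_eq_zero_of_lt (by omega : n < n + 1),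
      zero_mul, add_zero]
  rw [Geg_one_half_eq_sum_legendreCoeff, Geg_one_half_eq_sum_legendreCoeff, hext,
    ← Finset.sum_add_distrib, Finset.sum_range_succ']
  simp only [← add_mul, h0, zero_mul, add_zero]

theorem integral_rpow_mul_sub_rpow {a s t : ℝ} (ha : 0 < a) (hs : 0 < s) (ht : 0 < t) :
    ∫ u in (0 : ℝ)..a, u ^ (s - 1) * (a - u) ^ (t - 1)
      = a ^ (s + t - 1) * ProbabilityTheory.beta s t := by
  apply Complex.ofReal_injective
  rw [intervalIntegral.integral_ofReal.symm]
  have hcongr : ∀ u ∈ Set.uIcc 0 a, (((u ^ (s - 1) * (a - u) ^ (t - 1) : ℝ)) : ℂ)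
      = (u : ℂ) ^ ((s : ℂ) - 1) * ((a : ℂ) - u) ^ ((t : ℂ) - 1) := by
    intro u hu
    rw [Set.uIcc_of_le ha.le] at hu
    rw [Complex.ofReal_mul, Complex.ofReal_cpow hu.1, Complex.ofReal_cpow (by linarith [hu.2])]
    push_cast
    rfl
  rw [intervalIntegral.integral_congr hcongr, Complex.betaIntegral_scaled _ _ ha,
    Complex.betaIntegral_eq_Gamma_mul_div _ _ (by simpa using hs) (by simpa using ht),
    ProbabilityTheory.beta]
  push_cast
  rw [Complex.ofReal_cpow ha.le, ← Complex.ofReal_add, Complex.Gamma_ofReal, Complex.Gamma_ofReal,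
    Complex.Gamma_ofReal]
  push_cast
  ring

theorem Real.Gamma_nat_add_three_halves_div (k : ℕ) :
    Real.Gamma (k + 3 / 2) / Real.Gamma (k + 2) = √π * (k + 1).centralBinom / 4 ^ (k + 1) := by
  induction k with
  | zero =>
    rw [show ((0 : ℕ) : ℝ) + 3 / 2 = 1 / 2 + 1 by norm_num,
      show ((0 : ℕ) : ℝ) + 2 = 1 + 1 by norm_num, Real.Gamma_add_one (by norm_num),
      Real.Gamma_add_one one_ne_zero, Real.Gamma_one_half_eq, Real.Gamma_one]
    norm_num [Nat.centralBinom_eq_two_mul_choose]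
    ring
  | succ k ih =>
    have hc :
        ((k : ℝ) + 2) * (k + 1 + 1).centralBinom = 2 * (2 * k + 3) * (k + 1).centralBinom := by
      exact_mod_cast Nat.succ_mul_centralBinom_succ (k + 1)
    have hG : Real.Gamma (k + 2) ≠ 0 := (Real.Gamma_pos_of_pos (by positivity)).ne'
    rw [Nat.cast_succ, show (k : ℝ) + 1 + 3 / 2 = k + 3 / 2 + 1 by ring,
      show (k : ℝ) + 1 + 2 = k + 2 + 1 by ring, Real.Gamma_add_one (by positivity),
      Real.Gamma_add_one (by positivity)]
    rw [div_eq_iff hG] at ih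
    rw [div_eq_iff (by positivity), ih]
    field_simp
    linear_combination -2 * (4 : ℝ) ^ (k + 1) * hc

theorem ProbabilityTheory.beta_nat_add_three_halves_one_half (k : ℕ) :
    ProbabilityTheory.beta (k + 3 / 2) (1 / 2) = π * (k + 1).centralBinom / 4 ^ (k + 1) := by
  rw [ProbabilityTheory.beta, Real.Gamma_one_half_eq, show (k : ℝ) + 3 / 2 + 1 / 2 = k + 2 by ring,
    mul_div_right_comm, Real.Gamma_nat_add_three_halves_div]
  linear_combination ((k + 1).centralBinom / 4 ^ (k + 1) : ℝ) * Real.mul_self_sqrt Real.pi_pos.le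

theorem intervalIntegrable_div_sqrt_sub {g : ℝ → ℝ} {a x : ℝ} (hax : a ≤ x)
    (hg : ContinuousOn g (Set.Icc a x)) :
    IntervalIntegrable (fun t => g t / √(x - t)) volume a x := by
  have hpow : IntervalIntegrable (fun t => (x - t) ^ (-(1 / 2) : ℝ)) volume a x := by
    simpa using (intervalIntegral.intervalIntegrable_rpow' (a := x - a) (b := 0)
      (by norm_num : (-1 : ℝ) < -(1 / 2))).comp_sub_left x
  refine (hpow.continuousOn_mul (by rwa [Set.uIcc_of_le hax])).congr fun t ht => ?_
  rw [Set.uIoc_of_le hax] at ht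
  simp only [Real.sqrt_eq_rpow, Real.rpow_neg (sub_nonneg.2 ht.2), div_eq_mul_inv]

theorem integral_sqrt_mul_pow_div_sqrt (k : ℕ) {x : ℝ} (hx : -1 < x) :
    ∫ t in (-1 : ℝ)..x, √(1 + t) * (1 + t) ^ k / √(x - t)
      = π * (k + 1).centralBinom / 4 ^ (k + 1) * (1 + x) ^ (k + 1) := by
  have ha : 0 < 1 + x := by linarith
  set f : ℝ → ℝ := fun u => √u * u ^ k / √(1 + x - u)
  calc ∫ t in (-1 : ℝ)..x, √(1 + t) * (1 + t) ^ k / √(x - t)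
      = ∫ t in (-1 : ℝ)..x, f (1 + t) := by simp only [f, add_sub_add_left_eq_sub]
    _ = ∫ u in (0 : ℝ)..(1 + x), f u := by rw [intervalIntegral.integral_comp_add_left]; norm_num
    _ = ∫ u in (0 : ℝ)..(1 + x), u ^ ((k + 3 / 2 : ℝ) - 1) * (1 + x - u) ^ ((1 / 2 : ℝ) - 1) := by
      refine intervalIntegral.integral_congr fun u hu => ?_
      rw [Set.uIcc_of_le ha.le] at hu
      rw [show (k + 3 / 2 : ℝ) - 1 = k + 1 / 2 by ring, show (1 / 2 : ℝ) - 1 = -(1 / 2) by norm_num,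
        Real.rpow_add' hu.1 (by positivity), Real.rpow_natCast, Real.rpow_neg (sub_nonneg.2 hu.2),
        ← Real.sqrt_eq_rpow, ← Real.sqrt_eq_rpow]
      simp only [f]
      ring
    _ = _ := by
      rw [integral_rpow_mul_sub_rpow ha (by positivity) (by norm_num),
        ProbabilityTheory.beta_nat_add_three_halves_one_half,
        show (k + 3 / 2 : ℝ) + 1 / 2 - 1 = ((k + 1 : ℕ) : ℝ) by push_cast; ring, Real.rpow_natCast]
      ring

theorem integral_sqrt_mul_sum_div_sqrt (c : ℕ → ℝ) (N : ℕ) {x : ℝ} (hx : -1 < x) :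
    ∫ t in (-1 : ℝ)..x, √(1 + t) * (∑ k ∈ Finset.range N, c k * (1 + t) ^ k) / √(x - t)
      = ∑ k ∈ Finset.range N,
          c k * (π * (k + 1).centralBinom / 4 ^ (k + 1)) * (1 + x) ^ (k + 1) := by
  have hsplit (t : ℝ) : √(1 + t) * (∑ k ∈ Finset.range N, c k * (1 + t) ^ k) / √(x - t)
      = ∑ k ∈ Finset.range N, c k * (√(1 + t) * (1 + t) ^ k / √(x - t)) := by
    rw [Finset.mul_sum, Finset.sum_div]
    exact Finset.sum_congr rfl fun k _ => by ring
  simp_rw [hsplit]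
  rw [intervalIntegral.integral_finsetSum fun k _ =>
    (intervalIntegrable_div_sqrt_sub hx.le (by fun_prop)).const_mul (c k)]
  refine Finset.sum_congr rfl fun k _ => ?_
  rw [intervalIntegral.integral_const_mul, integral_sqrt_mul_pow_div_sqrt k hx]
  ring

theorem chebyshevUCoeff_mul_centralBinom (n k : ℕ) :
    chebyshevUCoeff n k * (π * (k + 1).centralBinom / 4 ^ (k + 1))
      = π / 2 * (legendreCoeff (n + 1) (k + 1) + legendreCoeff n (k + 1)) := by
  have hpascal := congrArg (Nat.cast : ℕ → ℝ) (Nat.choose_succ_succ' (n + k + 1) (2 * k + 1))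
  have h4 : (4 : ℝ) ^ (k + 1) = 2 ^ (k + 1) * 2 ^ (k + 1) := by rw [← mul_pow]; norm_num
  simp only [chebyshevUCoeff, legendreCoeff]
  rw [show n + 1 + (k + 1) = n + k + 1 + 1 by ring, show n + (k + 1) = n + k + 1 by ring,
    show 2 * (k + 1) = 2 * k + 1 + 1 by ring, h4]
  push_cast at hpascal ⊢
  field_simp
  linear_combination -2 * (-1) ^ (n + k) * (k + 1).centralBinom * 2 ^ k * hpascal

theorem stmt8 (n : ℕ) (x : ℝ) (hx : x ∈ Set.Ioc (-1 : ℝ) 1) :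
    (1 / Real.sqrt π) *
        ∫ t in (-1 : ℝ)..x, Real.sqrt (1 + t) * Geg 1 n t / Real.sqrt (x - t) =
      Real.sqrt π / 2 * (Geg (1/2) (n + 1) x + Geg (1/2) n x) := by
  simp_rw [Geg_one_eq_sum_chebyshevUCoeff n]
  rw [integral_sqrt_mul_sum_div_sqrt _ _ hx.1, Geg_one_half_succ_add_self, Finset.mul_sum,
    Finset.mul_sum]
  refine Finset.sum_congr rfl fun k _ => ?_
  rw [chebyshevUCoeff_mul_centralBinom]
  have hπ : 0 < √π := Real.sqrt_pos.2 Real.pi_pos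
  field_simp
  rw [Real.sq_sqrt Real.pi_pos.le]
end

section
/- For every n ≥ 0, the Riemann–Liouville half-derivative of P_n satisfies d/dx[(1/√π)∫_{−1}^x P_n(t)(x−t)^{−1/2} dt] = (1/(√π·√(1+x)))·(U_n(x) + U_{n−1}(x)) for all x ∈ (−1, 1), where U_{−1} = 0. -/
/-!
Expanding `p` in powers of `t - x` and integrating term by term gives
`∫_{-1}^x p(t) (x - t)^{-1/2} dt = √(1 + x) · Φ(x)` for the polynomial `Φ = abelPoly (-1) p`, so
the half-derivative is `(Φ + 2(1 + x)Φ') / (2√π √(1 + x))`. The operator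
`q ↦ q + 2(1 + X) q'` is injective on polynomials and sends `abelPoly (-1) p` to
`2(1 + X) · abelPoly (-1) p' + 2 p(-1)`. For `p = P_n`, the recurrence
`P'_{n+2} = P'_n + (2n + 3) P_{n+1}` and the identity `V + 2(1 + X) V' = (2n + 1) W` for
`V = U_n - U_{n-1}`, `W = U_n + U_{n-1}` then give, by induction, `Φ = 2 V / (2n + 1)` and
`Φ + 2(1 + X) Φ' = 2 W`.
-/

open Real intervalIntegral

open Polynomial Finset

/-- `sqrtDeriv a q` is `2 √(x - a) · d/dx (√(x - a) q(x))`. -/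
noncomputable def sqrtDeriv (a : ℝ) : ℝ[X] →ₗ[ℝ] ℝ[X] :=
  LinearMap.id + LinearMap.mulLeft ℝ (2 * (X - C a)) ∘ₗ derivative

namespace sqrtDeriv

variable (a : ℝ)

theorem apply (q : ℝ[X]) : sqrtDeriv a q = q + 2 * (X - C a) * derivative q := rfl

theorem mul (f g : ℝ[X]) :
    sqrtDeriv a (f * g) = f * sqrtDeriv a g + 2 * (X - C a) * derivative f * g := by
  simp only [apply, derivative_mul]
  ring

theorem X_sub_C_pow (i : ℕ) :
    sqrtDeriv a ((X - C a) ^ i) = C (2 * i + 1 : ℝ) * (X - C a) ^ i := by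
  rcases i with _ | i
  · simp [apply]
  · simp only [apply, derivative_pow_succ, derivative_sub, derivative_X, derivative_C, map_add,
      map_mul, map_natCast, map_ofNat, map_one]
    push_cast
    ring

theorem C_sub_X_pow (i : ℕ) :
    sqrtDeriv a ((C a - X) ^ i) = C (2 * i + 1 : ℝ) * (C a - X) ^ i := by
  rw [show C a - X = C (-1) * (X - C a) by simp, mul_pow, ← C_pow, mul, X_sub_C_pow, derivative_C]
  ring

theorem coeff_succ (q : ℝ[X]) (k : ℕ) :
    (sqrtDeriv a q).coeff (k + 1)
      = (2 * (k + 1) + 1) * q.coeff (k + 1) - 2 * a * (k + 2) * q.coeff (k + 2) := by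
  rw [apply, coeff_add, mul_assoc, coeff_ofNat_mul, coeff_X_sub_C_mul, coeff_derivative,
    coeff_derivative]
  push_cast
  ring

theorem injective : Function.Injective (sqrtDeriv a) := by
  refine (injective_iff_map_eq_zero _).2 fun q hq => ?_
  by_contra hq0
  rcases hd : q.natDegree with _ | k
  · rw [eq_C_of_natDegree_eq_zero hd] at hq hq0
    simp_all [apply]
  · have h := congrArg (coeff · (k + 1)) hq
    simp only [coeff_succ, coeff_zero] at h
    rw [coeff_eq_zero_of_natDegree_lt (by omega : q.natDegree < k + 2)] at h
    have hlead : q.coeff (k + 1) ≠ 0 := hd ▸ leadingCoeff_ne_zero.2 hq0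
    have : (2 * ((k : ℝ) + 1) + 1) ≠ 0 := by positivity
    simp_all

end sqrtDeriv

theorem hasDerivAt_sqrt_sub_const_mul_eval (q : ℝ[X]) {a t : ℝ} (h : a < t) :
    HasDerivAt (fun y => √(y - a) * q.eval y) ((sqrtDeriv a q).eval t / (2 * √(t - a))) t := by
  have hpos : 0 < √(t - a) := Real.sqrt_pos.2 (sub_pos.2 h)
  have hsq : √(t - a) ^ 2 = t - a := Real.sq_sqrt (sub_pos.2 h).le
  refine ((((hasDerivAt_id t).sub_const a).sqrt (sub_pos.2 h).ne').mul
    (q.hasDerivAt t)).congr_deriv ?_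
  simp only [sqrtDeriv.apply, eval_add, eval_mul, eval_sub, eval_X, eval_C, eval_ofNat, id]
  field_simp
  linear_combination 2 * eval t (derivative q) * hsq

theorem hasDerivAt_sqrt_const_sub_mul_eval (q : ℝ[X]) {a t : ℝ} (h : t < a) :
    HasDerivAt (fun y => √(a - y) * q.eval y) (-(sqrtDeriv a q).eval t / (2 * √(a - t))) t := by
  have hpos : 0 < √(a - t) := Real.sqrt_pos.2 (sub_pos.2 h)
  have hsq : √(a - t) ^ 2 = a - t := Real.sq_sqrt (sub_pos.2 h).le
  refine ((((hasDerivAt_id t).const_sub a).sqrt (sub_pos.2 h).ne').mul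
    (q.hasDerivAt t)).congr_deriv ?_
  simp only [sqrtDeriv.apply, eval_add, eval_mul, eval_sub, eval_X, eval_C, eval_ofNat, id]
  field_simp
  linear_combination 2 * eval t (derivative q) * hsq

theorem derivative_hasseDeriv (i : ℕ) (p : ℝ[X]) :
    derivative (hasseDeriv i p) = hasseDeriv i (derivative p) := by
  have h₁ := LinearMap.congr_fun (hasseDeriv_comp (R := ℝ) 1 i) p
  have h₂ := LinearMap.congr_fun (hasseDeriv_comp (R := ℝ) i 1) p
  simp only [LinearMap.comp_apply, hasseDeriv_one', LinearMap.smul_apply] at h₁ h₂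
  rw [h₁, h₂, Nat.choose_one_right, Nat.choose_succ_self_right, Nat.add_comm 1 i]

theorem sum_range_taylor_coeff_mul_pow {p : ℝ[X]} {N : ℕ} (h : p.natDegree < N) (x y : ℝ) :
    ∑ i ∈ range N, (taylor x p).coeff i * (y - x) ^ i = p.eval y := by
  rw [← eval_eq_sum_range' (by rwa [natDegree_taylor]), taylor_eval, sub_add_cancel]

theorem sum_range_hasseDeriv_mul_pow {p : ℝ[X]} {N : ℕ} (h : p.natDegree < N) (a : ℝ) :
    ∑ i ∈ range N, hasseDeriv i p * (C a - X) ^ i = C (p.eval a) := by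
  refine Polynomial.funext fun x => ?_
  simp only [eval_finsetSum, eval_mul, eval_pow, eval_sub, eval_C, eval_X, ← taylor_coeff]
  exact sum_range_taylor_coeff_mul_pow h x a

theorem C_mul_C_two_div (n : ℕ) : C (2 * n + 1 : ℝ) * C (2 / (2 * n + 1) : ℝ) = 2 := by
  rw [← C_mul, mul_div_cancel₀ _ (by positivity), map_ofNat]

/-- The factor `2 / (2i + 1)` comes from
`∫_a^x (t - x)^i / √(x - t) dt = 2 / (2i + 1) · (a - x)^i √(x - a)`. -/
noncomputable def abelPoly (a : ℝ) (p : ℝ[X]) : ℝ[X] :=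
  ∑ i ∈ range (p.natDegree + 1), C (2 / (2 * i + 1) : ℝ) * hasseDeriv i p * (C a - X) ^ i

theorem abelPoly_eq_sum_range (a : ℝ) {p : ℝ[X]} {N : ℕ} (h : p.natDegree < N) :
    abelPoly a p = ∑ i ∈ range N, C (2 / (2 * i + 1) : ℝ) * hasseDeriv i p * (C a - X) ^ i := by
  refine sum_subset (range_subset_range.2 h) fun i hiN hi => ?_
  rw [hasseDeriv_eq_zero_of_lt_natDegree p i (by simp at hi; omega), mul_zero, zero_mul]

theorem abelPoly_add (a : ℝ) (p q : ℝ[X]) : abelPoly a (p + q) = abelPoly a p + abelPoly a q := by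
  have hN {r : ℝ[X]} (h : r.natDegree ≤ max p.natDegree q.natDegree) :
      abelPoly a r = ∑ i ∈ range (max p.natDegree q.natDegree + 1),
        C (2 / (2 * i + 1) : ℝ) * hasseDeriv i r * (C a - X) ^ i :=
    abelPoly_eq_sum_range a (Nat.lt_succ_of_le h)
  rw [hN (natDegree_add_le p q), hN (le_max_left _ _), hN (le_max_right _ _), ← sum_add_distrib]
  simp only [map_add]
  exact sum_congr rfl fun i _ => by ring

theorem abelPoly_C_mul (a c : ℝ) (p : ℝ[X]) : abelPoly a (C c * p) = C c * abelPoly a p := by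
  rw [abelPoly_eq_sum_range a (Nat.lt_succ_of_le (natDegree_C_mul_le c p)), abelPoly, mul_sum]
  refine sum_congr rfl fun i _ => ?_
  rw [← smul_eq_C_mul c, LinearMap.map_smul, smul_eq_C_mul]
  ring

theorem sqrtDeriv_abelPoly (a : ℝ) (p : ℝ[X]) :
    sqrtDeriv a (abelPoly a p) = 2 * (X - C a) * abelPoly a (derivative p) + C (2 * p.eval a) := by
  have hN := Nat.lt_succ_self p.natDegree
  have hN' : (derivative p).natDegree < p.natDegree + 1 :=
    (natDegree_derivative_le p).trans_lt (by omega)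
  have hterm (i : ℕ) : sqrtDeriv a (C (2 / (2 * i + 1) : ℝ) * hasseDeriv i p * (C a - X) ^ i)
      = 2 * (X - C a) * (C (2 / (2 * i + 1) : ℝ) * hasseDeriv i (derivative p) * (C a - X) ^ i)
        + 2 * (hasseDeriv i p * (C a - X) ^ i) := by
    rw [sqrtDeriv.mul, sqrtDeriv.C_sub_X_pow, derivative_C_mul, derivative_hasseDeriv]
    linear_combination (hasseDeriv i p * (C a - X) ^ i) * C_mul_C_two_div i
  rw [abelPoly_eq_sum_range a hN', abelPoly, map_sum, sum_congr rfl fun i _ => hterm i,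
    sum_add_distrib, ← mul_sum, ← mul_sum, sum_range_hasseDeriv_mul_pow hN, C_mul, map_ofNat]

theorem intervalIntegrable_eval_div_sqrt (p : ℝ[X]) {a x : ℝ} (h : a ≤ x) :
    IntervalIntegrable (fun t => p.eval t / √(x - t)) MeasureTheory.volume a x := by
  have hk : IntervalIntegrable (fun t => (x - t) ^ (-(1 / 2) : ℝ)) MeasureTheory.volume a x := by
    simpa using (intervalIntegral.intervalIntegrable_rpow' (a := 0) (b := x - a)
      (r := -(1 / 2)) (by norm_num)).comp_sub_left x |>.symm
  refine (hk.continuousOn_mul p.continuous.continuousOn).congr_uIoo fun t ht => ?_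
  rw [Set.uIoo_of_le h] at ht
  rw [Real.sqrt_eq_rpow]
  simp only [Real.rpow_neg (by linarith [ht.2] : (0 : ℝ) ≤ x - t), div_eq_mul_inv]

theorem integral_eval_div_sqrt (p : ℝ[X]) {a x : ℝ} (h : a < x) :
    ∫ t in a..x, p.eval t / √(x - t) = √(x - a) * (abelPoly a p).eval x := by
  have hN := Nat.lt_succ_self p.natDegree
  -- `sqrtDeriv x G = 2 p`, so `-√(x - t) G(t)` is an antiderivative of the integrand.
  set G : ℝ[X] := ∑ i ∈ range (p.natDegree + 1),
    C (2 / (2 * i + 1) * (taylor x p).coeff i : ℝ) * (X - C x) ^ i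
  have hterm (i : ℕ) (b : ℝ) : sqrtDeriv x (C (2 / (2 * i + 1) * b) * (X - C x) ^ i)
      = C (2 * b) * (X - C x) ^ i := by
    rw [sqrtDeriv.mul, sqrtDeriv.X_sub_C_pow, derivative_C, ← mul_assoc, ← C_mul]
    field_simp
    ring
  have hG : sqrtDeriv x G = C 2 * p := by
    refine Polynomial.funext fun t => ?_
    simp only [G, map_sum, hterm, eval_finsetSum, eval_mul, eval_pow, eval_sub, eval_C, eval_X]
    rw [← sum_range_taylor_coeff_mul_pow hN x t, mul_sum]
    exact sum_congr rfl fun i _ => by ring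
  have hGa : G.eval a = (abelPoly a p).eval x := by
    simp only [G, abelPoly, eval_finsetSum, eval_mul, eval_pow, eval_sub, eval_C, eval_X,
      taylor_coeff]
  have hderiv (t : ℝ) (ht : t ∈ Set.Ioo a x) :
      HasDerivAt (fun y => -(√(x - y) * G.eval y)) (p.eval t / √(x - t)) t := by
    refine (hasDerivAt_sqrt_const_sub_mul_eval G ht.2).neg.congr_deriv ?_
    rw [hG, eval_mul, eval_C]
    ring
  have hcont : ContinuousOn (fun y => -(√(x - y) * G.eval y)) (Set.Icc a x) := by fun_prop
  rw [intervalIntegral.integral_eq_sub_of_hasDerivAt_of_le h.le hcont hderiv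
    (intervalIntegrable_eval_div_sqrt p h.le), sub_self, Real.sqrt_zero, hGa]
  ring

noncomputable def gegenbauer (l : ℝ) : ℕ → ℝ[X]
  | 0 => 1
  | 1 => 2 * C l * X
  | (n + 2) => C ((n + 2 : ℝ)⁻¹) *
      (2 * ((n : ℝ[X]) + 1 + C l) * X * gegenbauer l (n + 1)
        - ((n : ℝ[X]) + 2 * C l) * gegenbauer l n)

theorem natCast_add_two_eq_C (n : ℕ) : (n + 2 : ℝ[X]) = C (n + 2 : ℝ) := by
  simp only [map_add, map_natCast, map_ofNat]

theorem natCast_add_two_mul_gegenbauer (l : ℝ) (n : ℕ) :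
    (n + 2 : ℝ[X]) * gegenbauer l (n + 2) = 2 * ((n : ℝ[X]) + 1 + C l) * X * gegenbauer l (n + 1)
      - ((n : ℝ[X]) + 2 * C l) * gegenbauer l n := by
  rw [gegenbauer, natCast_add_two_eq_C, ← mul_assoc, ← C_mul, mul_inv_cancel₀ (by positivity), C_1,
    one_mul]

theorem eval_gegenbauer (l : ℝ) (n : ℕ) (x : ℝ) : (gegenbauer l n).eval x = Geg l n x := by
  induction n using Nat.twoStepInduction with
  | zero => simp [gegenbauer, Geg]
  | one => simp [gegenbauer, Geg]
  | more n ih₀ ih₁ =>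
    rw [gegenbauer, Geg, ← ih₀, ← ih₁]
    simp only [eval_mul, eval_sub, eval_add, eval_C, eval_X, eval_natCast, eval_ofNat, eval_one]
    rw [div_eq_inv_mul]

theorem gegenbauer_one (n : ℕ) : gegenbauer 1 n = Chebyshev.U ℝ n := by
  induction n using Nat.twoStepInduction with
  | zero => simp [gegenbauer]
  | one => simp [gegenbauer, Chebyshev.U_one]
  | more n ih₀ ih₁ =>
    have h := natCast_add_two_mul_gegenbauer 1 n
    rw [ih₀, ih₁, C_1] at h
    refine mul_left_cancel₀ (natCast_add_two_eq_C n ▸ C_ne_zero.2 (by positivity)) (h.trans ?_)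
    push_cast
    rw [Chebyshev.U_add_two]
    ring

theorem derivative_gegenbauer_succ_relations (l : ℝ) (n : ℕ) :
    X * derivative (gegenbauer l (n + 1))
        = derivative (gegenbauer l n) + ((n : ℝ[X]) + 1) * gegenbauer l (n + 1) ∧
      derivative (gegenbauer l (n + 1))
        = X * derivative (gegenbauer l n) + ((n : ℝ[X]) + 2 * C l) * gegenbauer l n := by
  induction n with
  | zero =>
    simp only [gegenbauer, derivative_mul, derivative_C, derivative_X, derivative_ofNat,
      derivative_one]
    constructor <;> ring
  | succ n ih =>
    obtain ⟨hX, hA⟩ := ih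
    have hrec := natCast_add_two_mul_gegenbauer l n
    have hdrec := congrArg derivative hrec
    simp only [derivative_mul, derivative_add, derivative_sub, derivative_natCast, derivative_ofNat,
      derivative_one, derivative_C, derivative_X] at hdrec
    have hA' : derivative (gegenbauer l (n + 2))
        = X * derivative (gegenbauer l (n + 1))
          + ((n : ℝ[X]) + 1 + 2 * C l) * gegenbauer l (n + 1) := by
      refine mul_left_cancel₀ (natCast_add_two_eq_C n ▸ C_ne_zero.2 (by positivity)) ?_
      linear_combination hdrec + ((n : ℝ[X]) + 2 * C l) * hX
    push_cast
    refine ⟨?_, by linear_combination hA'⟩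
    linear_combination X * hA' + X * hX - hA - hrec

theorem derivative_gegenbauer_add_two (l : ℝ) (n : ℕ) :
    derivative (gegenbauer l (n + 2))
      = derivative (gegenbauer l n) + 2 * ((n : ℝ[X]) + 1 + C l) * gegenbauer l (n + 1) := by
  have hA := (derivative_gegenbauer_succ_relations l (n + 1)).2
  push_cast at hA
  linear_combination hA + (derivative_gegenbauer_succ_relations l n).1

theorem eval_neg_one_legendre (n : ℕ) : (gegenbauer (1 / 2) n).eval (-1) = (-1) ^ n := by
  induction n using Nat.twoStepInduction with
  | zero => simp [gegenbauer]
  | one => simp [gegenbauer]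
  | more n ih₀ ih₁ =>
    have h := congrArg (eval (-1)) (natCast_add_two_mul_gegenbauer (1 / 2) n)
    simp only [eval_mul, eval_sub, eval_add, eval_C, eval_X, eval_natCast, eval_ofNat, eval_one,
      ih₀, ih₁] at h
    refine mul_left_cancel₀ (by positivity : (n + 2 : ℝ) ≠ 0) (h.trans ?_)
    ring

/-- The Chebyshev polynomials of the third kind. -/
noncomputable def chebyshevV (n : ℕ) : ℝ[X] := Chebyshev.U ℝ n - Chebyshev.U ℝ ((n : ℤ) - 1)

/-- The Chebyshev polynomials of the fourth kind. -/
noncomputable def chebyshevW (n : ℕ) : ℝ[X] := Chebyshev.U ℝ n + Chebyshev.U ℝ ((n : ℤ) - 1)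

theorem chebyshevV_add_two (n : ℕ) :
    chebyshevV (n + 2) = 2 * X * chebyshevV (n + 1) - chebyshevV n := by
  simp only [chebyshevV]
  push_cast
  rw [add_sub_cancel_right, show (n : ℤ) + 2 - 1 = n + 1 by ring, Chebyshev.U_add_two,
    Chebyshev.U_add_one]
  ring

theorem chebyshevW_add_two (n : ℕ) :
    chebyshevW (n + 2) = 2 * X * chebyshevW (n + 1) - chebyshevW n := by
  simp only [chebyshevW]
  push_cast
  rw [add_sub_cancel_right, show (n : ℤ) + 2 - 1 = n + 1 by ring, Chebyshev.U_add_two,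
    Chebyshev.U_add_one]
  ring

theorem chebyshevW_add_two_eq_add (n : ℕ) :
    chebyshevW (n + 2) = chebyshevW n + 2 * (X + 1) * chebyshevV (n + 1) := by
  simp only [chebyshevW, chebyshevV]
  push_cast
  rw [add_sub_cancel_right, show (n : ℤ) + 2 - 1 = n + 1 by ring, Chebyshev.U_add_two,
    Chebyshev.U_add_one]
  ring

theorem sqrtDeriv_chebyshevV (n : ℕ) :
    sqrtDeriv (-1) (chebyshevV n) = C (2 * n + 1 : ℝ) * chebyshevW n := by
  induction n using Nat.twoStepInduction with
  | zero => simp [chebyshevV, chebyshevW, sqrtDeriv.apply]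
  | one =>
    norm_num [chebyshevV, chebyshevW, sqrtDeriv.apply, Chebyshev.U_one, C_ofNat]
    ring
  | more n ih₀ ih₁ =>
    rw [chebyshevV_add_two, map_sub, sqrtDeriv.mul, ih₀, ih₁]
    simp only [map_add, map_mul, map_natCast, map_ofNat, map_one]
    push_cast
    simp only [derivative_mul, derivative_ofNat, derivative_X, map_neg, C_1, sub_neg_eq_add]
    linear_combination -(2 * (n : ℝ[X]) + 3) * chebyshevW_add_two n
      - 2 * chebyshevW_add_two_eq_add n

theorem two_mul_C_half : (2 : ℝ[X]) * C (1 / 2) = 1 := by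
  rw [← map_ofNat C 2, ← C_mul, mul_one_div_cancel two_ne_zero, C_1]

theorem derivative_legendre_add_two (n : ℕ) :
    derivative (gegenbauer (1 / 2) (n + 2))
      = derivative (gegenbauer (1 / 2) n)
        + C (2 * (n + 1 : ℕ) + 1 : ℝ) * gegenbauer (1 / 2) (n + 1) := by
  rw [derivative_gegenbauer_add_two]
  simp only [map_add, map_mul, map_natCast, map_ofNat, map_one]
  push_cast
  linear_combination gegenbauer (1 / 2) (n + 1) * two_mul_C_half

theorem sqrtDeriv_abelPoly_legendre_of {n : ℕ}
    (h : (X + 1) * abelPoly (-1) (derivative (gegenbauer (1 / 2) n)) + C ((-1) ^ n)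
      = chebyshevW n) :
    sqrtDeriv (-1) (abelPoly (-1) (gegenbauer (1 / 2) n)) = 2 * chebyshevW n := by
  rw [sqrtDeriv_abelPoly, eval_neg_one_legendre, ← h, map_neg, C_1, sub_neg_eq_add, C_mul,
    map_ofNat]
  ring

theorem abelPoly_legendre_of {n : ℕ}
    (h : (X + 1) * abelPoly (-1) (derivative (gegenbauer (1 / 2) n)) + C ((-1) ^ n)
      = chebyshevW n) :
    abelPoly (-1) (gegenbauer (1 / 2) n) = C (2 / (2 * n + 1) : ℝ) * chebyshevV n := by
  refine sqrtDeriv.injective (-1) ?_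
  rw [sqrtDeriv_abelPoly_legendre_of h, sqrtDeriv.mul, sqrtDeriv_chebyshevV, derivative_C]
  linear_combination -chebyshevW n * C_mul_C_two_div n

/-- The induction runs on this identity: through `derivative_legendre_add_two` its step only
needs `abelPoly (-1) P_{n+1}`, which `abelPoly_legendre_of` computes from the identity at `n + 1`. -/
theorem X_add_one_mul_abelPoly_derivative_legendre (n : ℕ) :
    (X + 1) * abelPoly (-1) (derivative (gegenbauer (1 / 2) n)) + C ((-1) ^ n) = chebyshevW n := by
  induction n using Nat.twoStepInduction with
  | zero => simp [gegenbauer, abelPoly, chebyshevW]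
  | one =>
    have h : derivative (gegenbauer (1 / 2) 1) = 1 := by
      simp only [gegenbauer, derivative_mul, derivative_X, derivative_C, derivative_ofNat]
      linear_combination two_mul_C_half
    rw [h]
    simp [abelPoly, chebyshevW, C_ofNat]
    ring
  | more n ih₀ ih₁ =>
    rw [derivative_legendre_add_two, abelPoly_add, abelPoly_C_mul, abelPoly_legendre_of ih₁,
      ← mul_assoc, C_mul_C_two_div, pow_add, neg_one_sq, mul_one]
    linear_combination ih₀ - chebyshevW_add_two_eq_add n

theorem sqrtDeriv_abelPoly_legendre (n : ℕ) :
    sqrtDeriv (-1) (abelPoly (-1) (gegenbauer (1 / 2) n)) = 2 * chebyshevW n :=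
  sqrtDeriv_abelPoly_legendre_of (X_add_one_mul_abelPoly_derivative_legendre n)

theorem gegZ_natCast (l : ℝ) (n : ℕ) (x : ℝ) : GegZ l n x = (gegenbauer l n).eval x := by
  simp [GegZ, eval_gegenbauer]

theorem gegZ_one {n : ℤ} (hn : -1 ≤ n) (x : ℝ) : GegZ 1 n x = (Chebyshev.U ℝ n).eval x := by
  obtain rfl | hn := hn.eq_or_lt
  · simp [GegZ]
  · lift n to ℕ using (by omega)
    rw [gegZ_natCast, gegenbauer_one]

theorem stmt10 (n : ℤ) (hn : 0 ≤ n) (x : ℝ) (hx : x ∈ Set.Ioo (-1 : ℝ) 1) :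
    HasDerivAt
      (fun y => (1 / Real.sqrt π) * ∫ t in (-1 : ℝ)..y, GegZ (1/2) n t / Real.sqrt (y - t))
      (1 / (Real.sqrt π * Real.sqrt (1 + x)) * (GegZ 1 n x + GegZ 1 (n - 1) x)) x := by
  lift n to ℕ using hn
  have hW : GegZ 1 n x + GegZ 1 (n - 1) x = (chebyshevW n).eval x := by
    rw [gegZ_one (by omega), gegZ_one (by omega), chebyshevW, eval_add]
  have hI : (fun y => 1 / √π * ∫ t in (-1 : ℝ)..y, GegZ (1 / 2) n t / √(y - t)) =ᶠ[nhds x]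
      fun y => 1 / √π * (√(y - -1) * (abelPoly (-1) (gegenbauer (1 / 2) n)).eval y) := by
    filter_upwards [Ioi_mem_nhds hx.1] with y hy
    simp only [gegZ_natCast, integral_eval_div_sqrt _ hy]
  refine (((hasDerivAt_sqrt_sub_const_mul_eval _ hx.1).const_mul (1 / √π)).congr_of_eventuallyEq
    hI).congr_deriv ?_
  rw [sqrtDeriv_abelPoly_legendre, hW, eval_mul, eval_ofNat, sub_neg_eq_add, add_comm x 1]
  field_simp
end

section
/- For every n ≥ 0, the Riemann–Liouville half-derivative of √(1+t)·U_n(t) satisfies d/dx[(1/√π)∫_{−1}^x √(1+t)·U_n(t)(x−t)^{−1/2} dt] = (√π/2)·(C_n^{(3/2)}(x) + C_{n−1}^{(3/2)}(x)) for x ∈ (−1,1), where C_{−1}^{(3/2)} = 0. -/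
open Real intervalIntegral

/-! With `s = 1 + t`, the substitution `t = -1 + (1 + y) sin² θ` turns
`∫_{-1}^y √(1+t) s^k (y-t)^{-1/2} dt` into a Wallis integral, equal to
`(π/2) γ_k (1+y)^{k+1}/(k+1)` with `γ_k = ∏_{i<k} (2i+3)/(2i+2) = Γ(k+3/2)/(Γ(3/2) k!)`.
So on polynomials in `s` the half-derivative of `√s p(s)` is `(√π/2) (T p)(s)`, where `T` is
the diagonal operator `s^k ↦ γ_k s^k`. Since `γ_{k+1} = γ_k (1 + 1/(2k+2))`, `T` satisfies
`T (s p) = s T p + ½ ∫_0^s T p`. Fed into `U_{n+2} = 2x U_{n+1} - U_n`, this shows that both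
`T U_n` and `W_n = C_n + C_{n-1}` satisfy `W_{n+2} = 2x W_{n+1} - W_n + ∫_{-1}^x W_{n+1}`,
the primitive of `W_n` from `-1` being the Legendre sum `P_{n+1} + P_n`. -/

open Polynomial Set MeasureTheory Filter Topology

noncomputable def gammaRatio (k : ℕ) : ℝ :=
  ∏ i ∈ Finset.range k, (2 * (i : ℝ) + 3) / (2 * i + 2)

lemma gammaRatio_succ (k : ℕ) :
    gammaRatio (k + 1) = gammaRatio k * (2 * k + 3) / (2 * k + 2) := by
  rw [gammaRatio, Finset.prod_range_succ, mul_div_assoc]; rfl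

noncomputable def halfDerivPoly : ℝ[X] →ₗ[ℝ] ℝ[X] :=
  lsum fun k => gammaRatio k • monomial k

noncomputable def primitive : ℝ[X] →ₗ[ℝ] ℝ[X] :=
  lsum fun k => ((k : ℝ) + 1)⁻¹ • monomial (k + 1)

@[simp]
lemma halfDerivPoly_monomial (k : ℕ) (a : ℝ) :
    halfDerivPoly (monomial k a) = monomial k (gammaRatio k * a) := by
  simp [halfDerivPoly, sum_monomial_index, smul_monomial]

@[simp]
lemma halfDerivPoly_C (a : ℝ) : halfDerivPoly (C a) = C a := by
  simp [← monomial_zero_left, gammaRatio]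

@[simp]
lemma primitive_monomial (k : ℕ) (a : ℝ) :
    primitive (monomial k a) = monomial (k + 1) (a / (k + 1)) := by
  simp [primitive, sum_monomial_index, smul_monomial, div_eq_inv_mul]

lemma derivative_primitive (p : ℝ[X]) : derivative (primitive p) = p := by
  induction p using Polynomial.induction_on' with
  | add p q hp hq => simp [hp, hq]
  | monomial k a =>
    rw [primitive_monomial, derivative_monomial, add_tsub_cancel_right]
    congr 1
    push_cast
    field_simp

lemma eval_zero_primitive (p : ℝ[X]) : (primitive p).eval 0 = 0 := by
  induction p using Polynomial.induction_on' with
  | add p q hp hq => simp [hp, hq]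
  | monomial k a => simp

lemma halfDerivPoly_X_mul (p : ℝ[X]) :
    halfDerivPoly (X * p)
      = X * halfDerivPoly p + (1 / 2 : ℝ) • primitive (halfDerivPoly p) := by
  induction p using Polynomial.induction_on' with
  | add p q hp hq => simp only [mul_add, map_add, hp, hq, smul_add]; ring
  | monomial k a =>
    rw [X_mul_monomial, halfDerivPoly_monomial, halfDerivPoly_monomial, primitive_monomial,
      X_mul_monomial, smul_monomial, ← (monomial (k + 1)).map_add, gammaRatio_succ]
    congr 1
    rw [smul_eq_mul]
    field_simp
    ring

lemma hasDerivAt_eval_one_add (p : ℝ[X]) (x : ℝ) :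
    HasDerivAt (fun y => p.eval (1 + y)) (p.derivative.eval (1 + x)) x := by
  have h := (p.hasDerivAt (1 + x)).comp x ((hasDerivAt_id' x).const_add 1)
  rwa [mul_one] at h

lemma eval_primitive_eq_of_hasDerivAt {q : ℝ[X]} {f : ℝ → ℝ}
    (hf : ∀ x, HasDerivAt f (q.eval (1 + x)) x) (hf₀ : f (-1) = 0) (x : ℝ) :
    (primitive q).eval (1 + x) = f x := by
  have hd : ∀ y, HasDerivAt (fun y => (primitive q).eval (1 + y) - f y) 0 y := fun y => by
    have h := (hasDerivAt_eval_one_add (primitive q) y).fun_sub (hf y)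
    rwa [derivative_primitive, sub_self] at h
  have h := is_const_of_deriv_eq_zero (fun y => (hd y).differentiableAt) (fun y => (hd y).deriv)
    x (-1)
  norm_num [eval_zero_primitive, hf₀] at h
  linarith

lemma Geg_add_two (l : ℝ) (n : ℕ) (x : ℝ) :
    ((n : ℝ) + 2) * Geg l (n + 2) x
      = 2 * ((n : ℝ) + 1 + l) * x * Geg l (n + 1) x - ((n : ℝ) + 2 * l) * Geg l n x := by
  rw [Geg]; field_simp

@[simp]
lemma GegZ_natCast (l : ℝ) (n : ℕ) (x : ℝ) : GegZ l n x = Geg l n x := by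
  simp [GegZ]

lemma Geg_half_neg_one (n : ℕ) : Geg (1 / 2) n (-1) = (-1) ^ n := by
  induction n using Nat.twoStepInduction with
  | zero => rfl
  | one => norm_num [Geg]
  | more n ih₁ ih₂ =>
    have h := Geg_add_two (1 / 2) n (-1)
    rw [ih₁, ih₂] at h
    have hn : (n : ℝ) + 2 ≠ 0 := by positivity
    apply mul_left_cancel₀ hn
    linear_combination h

lemma Geg_half_eq_sub (n : ℕ) (x : ℝ) :
    (2 * (n : ℝ) + 5) * Geg (1 / 2) (n + 2) x = Geg (3 / 2) (n + 2) x - Geg (3 / 2) n x := by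
  induction n using Nat.twoStepInduction generalizing x with
  | zero => norm_num [Geg]; ring
  | one => norm_num [Geg]; ring
  | more m ih₁ ih₂ =>
    have hP := Geg_add_two (1 / 2) (m + 2) x
    have hC₂ := Geg_add_two (3 / 2) (m + 2) x
    have hC₀ := Geg_add_two (3 / 2) m x
    have h₁ := ih₁ x
    have h₂ := ih₂ x
    push_cast at hP hC₂ hC₀ h₁ h₂ ⊢
    have hm : ((m : ℝ) + 4) * (2 * m + 5) ≠ 0 := by positivity
    apply mul_left_cancel₀ hm
    linear_combination (2 * (m : ℝ) + 5) * (2 * m + 9) * hP - (2 * (m : ℝ) + 5) * hC₂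
      + (2 * (m : ℝ) + 9) * hC₀ - (2 * (m : ℝ) + 9) * (m + 3) * h₁
      + (2 * (m : ℝ) + 5) * (2 * m + 9) * x * h₂

lemma hasDerivAt_Geg_half_succ (n : ℕ) (x : ℝ) :
    HasDerivAt (Geg (1 / 2) (n + 1)) (Geg (3 / 2) n x) x := by
  induction n using Nat.twoStepInduction generalizing x with
  | zero =>
    have h : Geg (1 / 2) (0 + 1) = id := by funext y; norm_num [Geg]
    rw [h]
    exact hasDerivAt_id x
  | one =>
    have h : Geg (1 / 2) (1 + 1) = fun y => (3 * y ^ 2 - 1) / 2 := by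
      funext y; norm_num [Geg]; ring
    rw [h]
    refine ((((hasDerivAt_pow 2 x).const_mul 3).sub_const 1).div_const 2).congr_deriv ?_
    norm_num [Geg]
    ring
  | more n ih₁ ih₂ =>
    have hn : (n : ℝ) + 3 ≠ 0 := by positivity
    have h : Geg (1 / 2) (n + 2 + 1) = fun y =>
        ((2 * n + 5) * (y * Geg (1 / 2) (n + 2) y) - (n + 2) * Geg (1 / 2) (n + 1) y)
          / (n + 3) := by
      funext y
      have hrec := Geg_add_two (1 / 2) (n + 1) y
      push_cast at hrec
      rw [eq_div_iff hn]
      linear_combination hrec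
    rw [h]
    refine ((((hasDerivAt_id' x).mul (ih₂ x)).const_mul _).sub
      ((ih₁ x).const_mul _)).div_const _ |>.congr_deriv ?_
    have hP := Geg_half_eq_sub n x
    have hC := Geg_add_two (3 / 2) n x
    rw [div_eq_iff hn]
    linear_combination hP - hC

noncomputable def gegSum (n : ℕ) (x : ℝ) : ℝ :=
  GegZ (3 / 2) n x + GegZ (3 / 2) ((n : ℤ) - 1) x

lemma gegSum_zero (x : ℝ) : gegSum 0 x = 1 := by
  simp [gegSum, GegZ, Geg]

lemma gegSum_succ (n : ℕ) (x : ℝ) :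
    gegSum (n + 1) x = Geg (3 / 2) (n + 1) x + Geg (3 / 2) n x := by
  rw [gegSum, GegZ_natCast, Nat.cast_succ, add_sub_cancel_right, GegZ_natCast]

lemma hasDerivAt_Geg_half_add (n : ℕ) (x : ℝ) :
    HasDerivAt (fun y => Geg (1 / 2) (n + 1) y + Geg (1 / 2) n y) (gegSum n x) x := by
  cases n with
  | zero =>
    simpa [gegSum_zero, Geg] using (hasDerivAt_Geg_half_succ 0 x).add_const 1
  | succ n =>
    rw [gegSum_succ]
    exact (hasDerivAt_Geg_half_succ (n + 1) x).add (hasDerivAt_Geg_half_succ n x)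

lemma gegSum_add_two (n : ℕ) (x : ℝ) :
    gegSum (n + 2) x
      = 2 * x * gegSum (n + 1) x - gegSum n x
        + (Geg (1 / 2) (n + 2) x + Geg (1 / 2) (n + 1) x) := by
  cases n with
  | zero => norm_num [gegSum_succ, gegSum_zero, Geg]; ring
  | succ m =>
    simp only [gegSum_succ]
    have hP₁ := Geg_half_eq_sub (m + 1) x
    have hP₀ := Geg_half_eq_sub m x
    have hC₁ := Geg_add_two (3 / 2) (m + 1) x
    have hC₀ := Geg_add_two (3 / 2) m x
    push_cast at hP₁ hP₀ hC₁ hC₀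
    have hm : (2 * (m : ℝ) + 5) * (2 * m + 7) ≠ 0 := by positivity
    apply mul_left_cancel₀ hm
    linear_combination -(2 * (m : ℝ) + 5) * hP₁ - (2 * (m : ℝ) + 7) * hP₀
      + 2 * (2 * (m : ℝ) + 5) * hC₁ + 2 * (2 * (m : ℝ) + 7) * hC₀

lemma Geg_one_eq_eval_U (n : ℕ) (x : ℝ) : Geg 1 n x = (Chebyshev.U ℝ n).eval x := by
  induction n using Nat.twoStepInduction with
  | zero => simp [Geg]
  | one => simp [Geg]
  | more n ih₁ ih₂ =>
    have h := Geg_add_two 1 n x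
    have hn : (n : ℝ) + 2 ≠ 0 := by positivity
    rw [ih₁, ih₂] at h
    push_cast
    simp only [Chebyshev.U_add_two, eval_sub, eval_mul, eval_X, eval_ofNat]
    apply mul_left_cancel₀ hn
    push_cast at h
    linear_combination h

noncomputable def chebyshevUShift (n : ℕ) : ℝ[X] := (Chebyshev.U ℝ n).comp (X - 1)

lemma eval_chebyshevUShift (n : ℕ) (x : ℝ) : (chebyshevUShift n).eval (1 + x) = Geg 1 n x := by
  simp [chebyshevUShift, Geg_one_eq_eval_U]

lemma chebyshevUShift_add_two (n : ℕ) :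
    chebyshevUShift (n + 2)
      = (2 : ℝ) • (X * chebyshevUShift (n + 1)) - (2 : ℝ) • chebyshevUShift (n + 1)
        - chebyshevUShift n := by
  simp only [chebyshevUShift, smul_eq_C_mul, C_ofNat]
  push_cast
  rw [Chebyshev.U_add_two]
  simp only [sub_comp, mul_comp, X_comp, ofNat_comp]
  ring

lemma eval_halfDerivPoly_chebyshevUShift (n : ℕ) (x : ℝ) :
    (halfDerivPoly (chebyshevUShift n)).eval (1 + x) = gegSum n x := by
  induction n using Nat.twoStepInduction generalizing x with
  | zero =>
    rw [chebyshevUShift, Nat.cast_zero, Chebyshev.U_zero, one_comp, ← C_1, halfDerivPoly_C,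
      eval_C, gegSum_zero]
  | one =>
    have h : chebyshevUShift 1 = monomial 1 2 - C 2 := by
      simp [chebyshevUShift, ← C_mul_X_eq_monomial, C_ofNat]; ring
    rw [h, map_sub, halfDerivPoly_monomial, halfDerivPoly_C]
    norm_num [gegSum_succ, Geg, gammaRatio]
    ring
  | more n ih₁ ih₂ =>
    have hprim : (primitive (halfDerivPoly (chebyshevUShift (n + 1)))).eval (1 + x)
        = Geg (1 / 2) (n + 2) x + Geg (1 / 2) (n + 1) x := by
      refine eval_primitive_eq_of_hasDerivAt
        (f := fun y => Geg (1 / 2) (n + 2) y + Geg (1 / 2) (n + 1) y) (fun y => ?_)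
        (by rw [Geg_half_neg_one, Geg_half_neg_one, pow_succ]; ring) x
      rw [ih₂]
      exact hasDerivAt_Geg_half_add (n + 1) y
    rw [chebyshevUShift_add_two, map_sub, map_sub, map_smul, map_smul, halfDerivPoly_X_mul]
    simp only [eval_sub, eval_smul, eval_add, eval_mul, eval_X, smul_eq_mul, ih₁, ih₂, hprim,
      gegSum_add_two]
    ring

lemma integral_sqrt_mul_div_sqrt_sub_eq (f : ℝ → ℝ) {y : ℝ} (hy : -1 < y) :
    ∫ t in (-1)..y, √(1 + t) * f t / √(y - t)
      = ∫ θ in 0..π / 2, 2 * (1 + y) * sin θ ^ 2 * f (-1 + (1 + y) * sin θ ^ 2) := by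
  have hy₀ : 0 < 1 + y := by linarith
  set φ : ℝ → ℝ := fun θ => -1 + (1 + y) * sin θ ^ 2
  set φ' : ℝ → ℝ := fun θ => (1 + y) * (2 * sin θ * cos θ)
  have hφ : ∀ θ, HasDerivAt φ (φ' θ) θ := fun θ => by
    simpa [φ, φ', pow_one] using (((hasDerivAt_sin θ).pow 2).const_mul (1 + y)).const_add (-1)
  have hpos : ∀ θ ∈ Ioo 0 (π / 2), 0 < sin θ ∧ 0 < cos θ := fun θ hθ =>
    ⟨sin_pos_of_pos_of_lt_pi hθ.1 (by linarith [hθ.2, pi_pos]),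
      cos_pos_of_mem_Ioo ⟨by linarith [hθ.1, pi_pos], hθ.2⟩⟩
  have hsubst := integral_comp_mul_deriv_of_deriv_nonneg
    (g := fun t => √(1 + t) * f t / √(y - t))
    (fun θ _ => (hφ θ).continuousAt.continuousWithinAt)
    (f' := φ') (a := 0) (b := π / 2) (fun θ _ => hφ θ) (fun θ hθ => by
      rw [min_eq_left (by positivity), max_eq_right (by positivity)] at hθ
      obtain ⟨hsin, hcos⟩ := hpos θ hθ
      exact mul_nonneg hy₀.le (by positivity))
  have hφ₀ : φ 0 = -1 := by simp [φ]
  have hφ₁ : φ (π / 2) = y := by simp [φ]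
  rw [hφ₀, hφ₁] at hsubst
  rw [← hsubst, integral_of_le (by positivity), integral_of_le (by positivity),
    integral_Ioc_eq_integral_Ioo, integral_Ioc_eq_integral_Ioo]
  refine setIntegral_congr_fun measurableSet_Ioo fun θ hθ => ?_
  obtain ⟨hsin, hcos⟩ := hpos θ hθ
  have h₁ : √(1 + φ θ) = √(1 + y) * sin θ := by
    rw [show 1 + φ θ = (1 + y) * sin θ ^ 2 by ring, Real.sqrt_mul hy₀.le, Real.sqrt_sq hsin.le]
  have h₂ : √(y - φ θ) = √(1 + y) * cos θ := by
    rw [show y - φ θ = (1 + y) * cos θ ^ 2 by linear_combination -(1 + y) * sin_sq_add_cos_sq θ,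
      Real.sqrt_mul hy₀.le, Real.sqrt_sq hcos.le]
  rw [show -1 + (1 + y) * sin θ ^ 2 = φ θ from rfl]
  simp only [Function.comp_apply, h₁, h₂, φ']
  field_simp

lemma integral_sin_pow_two_mul_add_two (k : ℕ) :
    ∫ θ in 0..π / 2, sin θ ^ (2 * k + 2) = π * gammaRatio k / (4 * (k + 1)) := by
  induction k with
  | zero => simp [gammaRatio]; ring
  | succ k ih =>
    rw [show 2 * (k + 1) + 2 = 2 * k + 2 + 2 by ring, integral_sin_pow, ih, gammaRatio_succ]
    rw [sin_zero, cos_pi_div_two, zero_pow (by omega), zero_mul, mul_zero, sub_zero, zero_div,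
      zero_add]
    push_cast
    field_simp
    ring

lemma integral_sqrt_mul_eval_div_sqrt_sub (p : ℝ[X]) {y : ℝ} (hy : -1 < y) :
    ∫ t in (-1)..y, √(1 + t) * p.eval (1 + t) / √(y - t)
      = π / 2 * (primitive (halfDerivPoly p)).eval (1 + y) := by
  rw [integral_sqrt_mul_div_sqrt_sub_eq _ hy]
  simp only [add_neg_cancel_left]
  induction p using Polynomial.induction_on' with
  | add p q hp hq =>
    have hint : ∀ r : ℝ[X], IntervalIntegrable
        (fun θ => 2 * (1 + y) * sin θ ^ 2 * r.eval ((1 + y) * sin θ ^ 2)) volume 0 (π / 2) :=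
      fun r => (by fun_prop : Continuous _).intervalIntegrable _ _
    rw [map_add, map_add, eval_add, mul_add (π / 2), ← hp, ← hq,
      ← integral_add (hint p) (hint q)]
    simp only [eval_add, mul_add (2 * (1 + y) * _)]
  | monomial k a =>
    have h : ∀ θ, 2 * (1 + y) * sin θ ^ 2 * (monomial k a).eval ((1 + y) * sin θ ^ 2)
        = 2 * a * (1 + y) ^ (k + 1) * sin θ ^ (2 * k + 2) := fun θ => by
      rw [eval_monomial, mul_pow, ← pow_mul]; ring
    rw [intervalIntegral.integral_congr fun θ _ => h θ, intervalIntegral.integral_const_mul,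
      integral_sin_pow_two_mul_add_two, halfDerivPoly_monomial, primitive_monomial, eval_monomial]
    field_simp
    ring

theorem stmt11 (n : ℤ) (hn : 0 ≤ n) (x : ℝ) (hx : x ∈ Set.Ioo (-1 : ℝ) 1) :
    HasDerivAt
      (fun y => (1 / Real.sqrt π) *
        ∫ t in (-1 : ℝ)..y, Real.sqrt (1 + t) * GegZ 1 n t / Real.sqrt (y - t))
      (Real.sqrt π / 2 * (GegZ (3/2) n x + GegZ (3/2) (n - 1) x)) x := by
  lift n to ℕ using hn
  have hF : (fun y => (1 / √π) * ∫ t in (-1 : ℝ)..y, √(1 + t) * GegZ 1 n t / √(y - t))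
      =ᶠ[𝓝 x]
        fun y => √π / 2 * (primitive (halfDerivPoly (chebyshevUShift n))).eval (1 + y) := by
    filter_upwards [Ioi_mem_nhds hx.1] with y hy
    simp only [GegZ_natCast, ← eval_chebyshevUShift, integral_sqrt_mul_eval_div_sqrt_sub _ hy]
    field_simp
    rw [sq_sqrt pi_pos.le]
  have hD := (hasDerivAt_eval_one_add (primitive (halfDerivPoly (chebyshevUShift n))) x).const_mul
    (√π / 2)
  rw [derivative_primitive, eval_halfDerivPoly_chebyshevUShift] at hD
  exact hD.congr_of_eventuallyEq hF
end
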